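/- Let 𝒞 = {0,1}^ω be the Cantor space and let 𝒞_ω = {(a_i)_{i∈ω} ∈ 𝒞 : a_i = 1 for infinitely many i}, with the subspace topology. The map φ : 𝒞_ω → S_c(ω+1) defined by φ((a_i)_{i∈ω}) = {i : a_i = 1} ∪ {ω} is a homeomorphism, where ω+1 carries its order topology (equivalently, it is the one-point compactification of the discrete space ω). -/

import Mathlib

open Set Topology

/-- The hyperspace of nonempty closed subsets of a topological space `X`. -/
structure CL (X : Type*) [TopologicalSpace X] : Type _ where
  carrier : Set X
  isClosed' : IsClosed carrier
  nonempty' : carrier.Nonempty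

/-- The basic Vietoris set `⟨𝒰⟩` determined by a finite family `𝒰` of subsets of `X`:
all nonempty closed sets contained in `⋃ 𝒰` and meeting every member of `𝒰`. -/
def CL.box {X : Type*} [TopologicalSpace X] (𝒰 : Finset (Set X)) : Set (CL X) :=
  {A | A.carrier ⊆ ⋃₀ (𝒰 : Set (Set X)) ∧ ∀ U ∈ 𝒰, (A.carrier ∩ U).Nonempty}

/-- The Vietoris topology on `CL X`, generated by the sets `⟨𝒰⟩` where `𝒰` ranges over
finite families of open subsets of `X`. -/
instance CL.instTopologicalSpace (X : Type*) [TopologicalSpace X] :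
    TopologicalSpace (CL X) :=
  TopologicalSpace.generateFrom
    {s | ∃ 𝒰 : Finset (Set X), (∀ U ∈ 𝒰, IsOpen U) ∧ s = CL.box 𝒰}

/-- `p` is the limit of the set `S`: `p ∈ S` and `S \ U` is finite for every open
set `U` containing `p`. -/
def IsLimitOf {X : Type*} [TopologicalSpace X] (S : Set X) (p : X) : Prop :=
  p ∈ S ∧ ∀ U : Set X, IsOpen U → p ∈ U → (S \ U).Finite

/-- `S` is a nontrivial convergent sequence in `X`: a countably infinite set having
a limit point belonging to it. -/
def IsNontrivialConvergentSeq {X : Type*} [TopologicalSpace X] (S : Set X) : Prop :=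
  S.Countable ∧ S.Infinite ∧ ∃ p, IsLimitOf S p

/-- The hyperspace `S_c(X)` of nontrivial convergent sequences in `X`, as a subset
of `CL X` (with the subspace Vietoris topology). -/
def Sc (X : Type*) [TopologicalSpace X] : Set (CL X) :=
  {A | IsNontrivialConvergentSeq A.carrier}

/-! In `OnePoint X` with `X` discrete every point of `X` is isolated, so a nontrivial convergent
sequence can only converge to `∞`; conversely, open neighbourhoods of `∞` are cofinite, so every
set consisting of `∞` and infinitely many points of `X` converges to `∞`. Thus `S_c(OnePoint X)`
consists exactly of the sets `insert ∞ s` with `s` infinite, and `s` is read off as an indicator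
function. Under this correspondence the Vietoris subbasic conditions become product-open ones:
`insert ∞ s ⊆ V` for an open `V ∋ ∞` constrains only the finitely many coordinates outside `V`,
and `insert ∞ s` meets `U` iff `∞ ∈ U` or some coordinate in `U` is `1`. Conversely, since each
`{n}` is clopen, `n ∈ A` is a clopen condition on `A`. -/

theorem IsLimitOf.not_isOpen_singleton {X : Type*} [TopologicalSpace X] {S : Set X} {p : X}
    (h : IsLimitOf S p) (hS : S.Infinite) : ¬IsOpen {p} := fun hp =>
  hS <| ((h.2 {p} hp rfl).union (finite_singleton p)).subset (subset_sdiff_union S {p})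

namespace CL

variable {Y : Type*} [TopologicalSpace Y]

theorem ext {A B : CL Y} (h : A.carrier = B.carrier) : A = B := by
  cases A; cases B; simpa using h

theorem isOpen_box {𝒰 : Finset (Set Y)} (h : ∀ U ∈ 𝒰, IsOpen U) : IsOpen (box 𝒰) :=
  TopologicalSpace.isOpen_generateFrom_of_mem ⟨𝒰, h, rfl⟩

theorem isOpen_setOf_carrier_subset {V : Set Y} (hV : IsOpen V) :
    IsOpen {A : CL Y | A.carrier ⊆ V} := by
  convert isOpen_box (𝒰 := {V}) (by simpa using hV) using 1
  ext A
  simp only [box, Finset.coe_singleton, sUnion_singleton, Finset.mem_singleton, forall_eq]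
  exact ⟨fun hA => ⟨hA, A.nonempty'.mono (subset_inter subset_rfl hA)⟩, And.left⟩

theorem isOpen_setOf_carrier_inter_nonempty {U : Set Y} (hU : IsOpen U) :
    IsOpen {A : CL Y | (A.carrier ∩ U).Nonempty} := by
  convert isOpen_box (𝒰 := {univ, U}) (by simp [hU]) using 1
  ext A
  simp [box, A.nonempty']

theorem continuous_iff {Z : Type*} [TopologicalSpace Z] {f : Z → CL Y} :
    Continuous f ↔ (∀ V, IsOpen V → IsOpen {z | (f z).carrier ⊆ V}) ∧
      ∀ U, IsOpen U → IsOpen {z | ((f z).carrier ∩ U).Nonempty} := by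
  refine ⟨fun hf => ⟨fun V hV => (isOpen_setOf_carrier_subset hV).preimage hf,
    fun U hU => (isOpen_setOf_carrier_inter_nonempty hU).preimage hf⟩, ?_⟩
  rintro ⟨hsub, hmeet⟩
  refine continuous_generateFrom_iff.2 ?_
  rintro _ ⟨𝒰, h𝒰, rfl⟩
  have : f ⁻¹' box 𝒰 = {z | (f z).carrier ⊆ ⋃₀ 𝒰} ∩
      ⋂ U ∈ 𝒰, {z | ((f z).carrier ∩ U).Nonempty} := by
    ext z; simp [box]
  rw [this]
  exact (hsub _ (isOpen_sUnion fun U hU => h𝒰 U hU)).inter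
    (isOpen_biInter_finset fun U hU => hmeet U (h𝒰 U hU))

theorem isClopen_setOf_mem_carrier [T1Space Y] {y : Y} (hy : IsOpen {y}) :
    IsClopen {A : CL Y | y ∈ A.carrier} := by
  constructor
  · rw [← isOpen_compl_iff]
    convert isOpen_setOf_carrier_subset (isOpen_compl_singleton (x := y)) using 1
    ext A; simp [subset_compl_singleton_iff]
  · convert isOpen_setOf_carrier_inter_nonempty hy using 1
    ext A; simp

open scoped Classical in
theorem continuous_decide_mem_carrier [T1Space Y] {y : Y} (hy : IsOpen {y}) :
    Continuous fun A : CL Y => decide (y ∈ A.carrier) :=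
  (continuous_bool_rng true).2 <| by
    convert isClopen_setOf_mem_carrier hy using 1
    ext A; simp

end CL

namespace OnePoint

variable {X : Type*}

def insertInfty (s : Set X) : Set (OnePoint X) :=
  insert ∞ ((↑) '' s)

@[simp]
theorem infty_mem_insertInfty (s : Set X) : ∞ ∈ insertInfty s :=
  mem_insert _ _

@[simp]
theorem coe_mem_insertInfty {s : Set X} {x : X} : (x : OnePoint X) ∈ insertInfty s ↔ x ∈ s := by
  simp [insertInfty, coe_ne_infty]

@[simp]
theorem preimage_coe_insertInfty (s : Set X) : ((↑) ⁻¹' insertInfty s : Set X) = s := by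
  ext; simp

theorem insertInfty_subset_iff {s : Set X} {V : Set (OnePoint X)} :
    insertInfty s ⊆ V ↔ ∞ ∈ V ∧ s ⊆ (↑) ⁻¹' V := by
  rw [insertInfty, insert_subset_iff, image_subset_iff]

theorem insertInfty_inter_nonempty_iff {s : Set X} {U : Set (OnePoint X)} :
    (insertInfty s ∩ U).Nonempty ↔ ∞ ∈ U ∨ (s ∩ (↑) ⁻¹' U).Nonempty := by
  simp [insertInfty, Set.Nonempty]

@[simp]
theorem infinite_insertInfty_iff {s : Set X} : (insertInfty s).Infinite ↔ s.Infinite :=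
  (not_congr finite_insert).trans (infinite_image_iff coe_injective.injOn)

theorem insertInfty_preimage_coe {S : Set (OnePoint X)} (h : ∞ ∈ S) :
    insertInfty ((↑) ⁻¹' S : Set X) = S := by
  ext x
  induction x using OnePoint.rec <;> simp [h]

variable [TopologicalSpace X] [DiscreteTopology X]

theorem isClosed_of_infty_mem {S : Set (OnePoint X)} (h : ∞ ∈ S) : IsClosed S :=
  (isClosed_iff_of_mem h).2 (isClosed_discrete _)

theorem finite_compl_preimage_coe {U : Set (OnePoint X)} (hU : IsOpen U) (h : ∞ ∈ U) :
    ((↑) ⁻¹' U : Set X)ᶜ.Finite :=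
  ((isOpen_iff_of_mem h).1 hU).2.finite_of_discrete

theorem isOpen_singleton_coe (x : X) : IsOpen {(x : OnePoint X)} := by
  simpa using isOpen_image_coe.2 (isOpen_discrete {x})

theorem isNontrivialConvergentSeq_iff [Countable X] {S : Set (OnePoint X)} :
    IsNontrivialConvergentSeq S ↔ ∞ ∈ S ∧ ((↑) ⁻¹' S : Set X).Infinite := by
  constructor
  · rintro ⟨-, hS, p, hp⟩
    have hp_infty : p = ∞ := by
      induction p using OnePoint.rec with
      | infty => rfl
      | coe x => exact absurd (isOpen_singleton_coe x) (hp.not_isOpen_singleton hS)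
    have h_infty : ∞ ∈ S := hp_infty ▸ hp.1
    refine ⟨h_infty, ?_⟩
    rwa [← infinite_insertInfty_iff, insertInfty_preimage_coe h_infty]
  · rintro ⟨h_infty, hs⟩
    rw [← insertInfty_preimage_coe h_infty]
    refine ⟨((to_countable _).image _).insert _, infinite_insertInfty_iff.2 hs, ∞,
      infty_mem_insertInfty _, fun U hU hU_infty => ?_⟩
    refine ((finite_compl_preimage_coe hU hU_infty).image (↑)).subset ?_
    rintro x ⟨hx, hxU⟩
    induction x using OnePoint.rec with
    | infty => exact absurd hU_infty hxU
    | coe x => exact mem_image_of_mem _ hxU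

def insertInftyCL (s : Set X) : CL (OnePoint X) :=
  ⟨insertInfty s, isClosed_of_infty_mem (infty_mem_insertInfty s), ⟨∞, infty_mem_insertInfty s⟩⟩

@[simp]
theorem insertInftyCL_carrier (s : Set X) : (insertInftyCL s).carrier = insertInfty s :=
  rfl

theorem continuous_insertInftyCL_setOf :
    Continuous fun a : X → Bool => insertInftyCL {i | a i = true} := by
  refine CL.continuous_iff.2 ⟨fun V hV => ?_, fun U hU => ?_⟩
  · simp only [insertInftyCL_carrier, insertInfty_subset_iff]
    by_cases hV_infty : ∞ ∈ V
    · have : {a : X → Bool | {i | a i = true} ⊆ (↑) ⁻¹' V} =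
          ((↑) ⁻¹' V : Set X)ᶜ.pi fun _ => {false} := by
        ext a; simp [subset_def, not_imp_comm]
      simpa [hV_infty, this] using
        isOpen_set_pi (finite_compl_preimage_coe hV hV_infty) fun _ _ => isOpen_discrete _
    · simp [hV_infty]
  · simp only [insertInftyCL_carrier, insertInfty_inter_nonempty_iff]
    have : {a : X → Bool | ∞ ∈ U ∨ ({i | a i = true} ∩ (↑) ⁻¹' U).Nonempty} =
        {_a | ∞ ∈ U} ∪ ⋃ i ∈ ((↑) ⁻¹' U : Set X), (fun a : X → Bool => a i) ⁻¹' {true} := by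
      ext a; simp [Set.Nonempty, and_comm]
    rw [this]
    exact isOpen_const.union
      (isOpen_biUnion fun i _ => (isOpen_discrete _).preimage (continuous_apply i))

theorem insertInftyCL_mem_Sc [Countable X] {s : Set X} (hs : s.Infinite) :
    insertInftyCL s ∈ Sc (OnePoint X) :=
  isNontrivialConvergentSeq_iff.2 ⟨infty_mem_insertInfty s, by simpa using hs⟩

open scoped Classical in
theorem continuous_decide_coe_mem_carrier :
    Continuous fun (A : CL (OnePoint X)) (i : X) => decide ((i : OnePoint X) ∈ A.carrier) :=
  continuous_pi fun i => CL.continuous_decide_mem_carrier (isOpen_singleton_coe i)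

open scoped Classical in
noncomputable def infiniteSupportHomeomorphSc [Countable X] :
    {a : X → Bool | {i | a i = true}.Infinite} ≃ₜ Sc (OnePoint X) where
  toFun a := ⟨insertInftyCL {i | a.1 i = true}, insertInftyCL_mem_Sc a.2⟩
  invFun A := ⟨fun i => decide ((i : OnePoint X) ∈ A.1.carrier),
    (isNontrivialConvergentSeq_iff.1 A.2).2.mono fun _ => decide_eq_true⟩
  left_inv a := by ext i; simp
  right_inv A := Subtype.ext <| CL.ext <| by
    simp only [decide_eq_true_eq, insertInftyCL_carrier]
    exact insertInfty_preimage_coe (isNontrivialConvergentSeq_iff.1 A.2).1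
  continuous_toFun := (continuous_insertInftyCL_setOf.comp continuous_subtype_val).subtype_mk _
  continuous_invFun := (continuous_decide_coe_mem_carrier.comp continuous_subtype_val).subtype_mk _

end OnePoint

open OnePoint in
/-- Let `𝒞_ω ⊆ {0,1}^ω` be the set of binary sequences with infinitely many ones,
with the subspace (product) topology.  The map `φ`, sending `a` to
`{i : a i = 1} ∪ {∞}` as an element of `S_c(ω+1)` (where `ω+1` is the one-point
compactification of the discrete space `ω`), is a homeomorphism. -/
theorem stmt_18 :
    ∃ φ : ({a : ℕ → Bool | {i : ℕ | a i = true}.Infinite} : Set (ℕ → Bool)) ≃ₜ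
        ((Sc (OnePoint ℕ) : Set (CL (OnePoint ℕ)))),
      ∀ a, ((φ a : CL (OnePoint ℕ))).carrier =
        insert (∞ : OnePoint ℕ)
          ((fun i : ℕ => (i : OnePoint ℕ)) '' {i : ℕ | (a : ℕ → Bool) i = true}) :=
  ⟨infiniteSupportHomeomorphSc, fun _ => rfl⟩
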